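/- arXiv:2311.03950 — 2 statements merged into one kernel-verified Lean document; each statement's English description precedes it below -/
import Mathlib

section
/- Let F be a strictly resource monotonic and consistent rule. In a θ-minimal proportional generalized claims problem, every stable partition π has at most θ − 1 agents belonging to coalitions of size smaller than θ. -/
/-!
If at least `θ` agents sat in coalitions of size below `θ`, each of them would receive `0`.
Any `θ` of them form a coalition whose endowment is the positive amount `α ∑ c`, and strict
resource monotonicity gives each member strictly more than the `0` they get at endowment `0`,
so this coalition blocks the partition.
-/

open Finset

section ClaimsRule

variable {N : Type*} (c : N → ℝ) (F : Finset N → ℝ → N → ℝ)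

def IsClaimsRule : Prop :=
  ∀ (S : Finset N) (e : ℝ), 0 ≤ e → e ≤ ∑ i ∈ S, c i →
    (∀ i ∈ S, 0 ≤ F S e i ∧ F S e i ≤ c i) ∧ (∑ i ∈ S, F S e i) = e

def StrictlyResourceMonotone : Prop :=
  ∀ (S : Finset N) (e e' : ℝ), 0 ≤ e → e < e' → e' ≤ ∑ i ∈ S, c i →
    ∀ i ∈ S, F S e i < F S e' i

variable {c F}

theorem IsClaimsRule.apply_zero {S : Finset N} (hF : IsClaimsRule c F)
    (hS : 0 ≤ ∑ k ∈ S, c k) {i : N} (hi : i ∈ S) : F S 0 i = 0 := by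
  obtain ⟨hbounds, hsum⟩ := hF S 0 le_rfl hS
  exact (sum_eq_zero_iff_of_nonneg fun k hk => (hbounds k hk).1).mp hsum i hi

theorem StrictlyResourceMonotone.apply_pos (hF : IsClaimsRule c F)
    (hmono : StrictlyResourceMonotone c F) {S : Finset N} {e : ℝ} (he : 0 < e)
    (heS : e ≤ ∑ k ∈ S, c k) {i : N} (hi : i ∈ S) : 0 < F S e i :=
  calc 0 ≤ F S 0 i := ((hF S 0 le_rfl (he.le.trans heS)).1 i hi).1
    _ < F S e i := hmono S 0 e le_rfl he heS i hi

end ClaimsRule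

theorem stable_partition_few_small_coalition_agents_general
    {N : Type*} [Fintype N] (θ : ℕ)
    (c : N → ℝ) (hc : ∀ i, 0 < c i) (α : ℝ) (hα0 : 0 < α) (hα1 : α < 1)
    (F : Finset N → ℝ → N → ℝ)
    (halloc : ∀ (S : Finset N) (e : ℝ), 0 ≤ e → e ≤ ∑ i ∈ S, c i →
      (∀ i ∈ S, 0 ≤ F S e i ∧ F S e i ≤ c i) ∧ (∑ i ∈ S, F S e i) = e)
    (hsrm : ∀ (S : Finset N) (e e' : ℝ), 0 ≤ e → e < e' → e' ≤ ∑ i ∈ S, c i →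
      ∀ i ∈ S, F S e i < F S e' i)
    (π : N → Finset N) (hπmem : ∀ i, i ∈ π i)
    (hstable : ¬ ∃ T : Finset N, T.Nonempty ∧
        ∀ i ∈ T, F T (if θ ≤ T.card then α * ∑ k ∈ T, c k else 0) i >
          F (π i) (if θ ≤ (π i).card then α * ∑ k ∈ π i, c k else 0) i) :
    (Finset.univ.filter (fun i => (π i).card < θ)).card ≤ θ - 1 := by
  set B := univ.filter fun i => (π i).card < θ
  by_contra! hmany
  obtain ⟨j, hj⟩ := card_pos.mp (show 0 < B.card by omega)
  have hθ : 0 < θ := (Nat.zero_le _).trans_lt (mem_filter.mp hj).2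
  obtain ⟨T, hTsmall, hTcard⟩ := exists_subset_card_eq (s := B) (n := θ) (by omega)
  have hT : T.Nonempty := card_pos.mp (by omega)
  have hcT : 0 < ∑ k ∈ T, c k := sum_pos (fun k _ => hc k) hT
  refine hstable ⟨T, hT, fun i hi => ?_⟩
  have hsmall : (π i).card < θ := (mem_filter.mp (hTsmall hi)).2
  rw [if_pos hTcard.ge, if_neg hsmall.not_ge,
    IsClaimsRule.apply_zero halloc (sum_nonneg fun k _ => (hc k).le) (hπmem i)]
  exact StrictlyResourceMonotone.apply_pos halloc hsrm (mul_pos hα0 hcT)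
    (mul_le_of_le_one_left hcT.le hα1.le) hi

/-- For a strictly resource monotonic and consistent rule in a θ-minimal
proportional generalized claims problem, every stable partition has at most
`θ - 1` agents belonging to coalitions of size smaller than `θ`. -/
theorem stable_partition_few_small_coalition_agents
    {N : Type*} [Fintype N] [DecidableEq N] (θ : ℕ)
    (c : N → ℝ) (hc : ∀ i, 0 < c i) (α : ℝ) (hα0 : 0 < α) (hα1 : α < 1)
    (F : Finset N → ℝ → N → ℝ)
    (halloc : ∀ (S : Finset N) (e : ℝ), 0 ≤ e → e ≤ ∑ i ∈ S, c i →
      (∀ i ∈ S, 0 ≤ F S e i ∧ F S e i ≤ c i) ∧ (∑ i ∈ S, F S e i) = e)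
    (hsrm : ∀ (S : Finset N) (e e' : ℝ), 0 ≤ e → e < e' → e' ≤ ∑ i ∈ S, c i →
      ∀ i ∈ S, F S e i < F S e' i)
    (hcons : ∀ (S : Finset N) (e : ℝ), 0 ≤ e → e ≤ ∑ i ∈ S, c i →
      ∀ S' : Finset N, S' ⊂ S →
        ∀ j ∈ S', F S' (∑ k ∈ S', F S e k) j = F S e j)
    (π : N → Finset N) (hπmem : ∀ i, i ∈ π i)
    (hπpart : ∀ i j, j ∈ π i → π j = π i)
    (hstable : ¬ ∃ T : Finset N, T.Nonempty ∧
        ∀ i ∈ T, F T (if θ ≤ T.card then α * ∑ k ∈ T, c k else 0) i >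
          F (π i) (if θ ≤ (π i).card then α * ∑ k ∈ π i, c k else 0) i) :
    (Finset.univ.filter (fun i => (π i).card < θ)).card ≤ θ - 1 :=
  stable_partition_few_small_coalition_agents_general θ c hc α hα0 hα1 F halloc hsrm π hπmem hstable
end

section
/- Under the constrained equal awards rule with claims 0 < c_1 ≤ c_{n-1} ≤ c_n and α satisfying 2c_1/(c_1+c_n) ≤ α ≤ 2c_{n-1}/(c_{n-1}+c_n): if α ≤ 2c_1/(2c_1 − c_{n-1} + c_n) then CEA_n over pair {n−1,n} (endowment α(c_{n-1}+c_n)) is at least CEA_n over pair {1,n} (endowment α(c_1+c_n)); and if α ≥ 2c_1/(2c_1 − c_{n-1} + c_n) the reverse inequality holds. -/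
/-- CEA payoff of the agent with claim `a` in the two-agent claims problem with
claims `a`, `b` and endowment `E` (with `0 ≤ E ≤ a + b`). -/
noncomputable def cea2 (a b E : ℝ) : ℝ :=
  if a ≤ b then min a (E / 2) else E - min b (E / 2)

theorem cea2_eq_half {a b E : ℝ} (ha : E / 2 ≤ a) (hb : E / 2 ≤ b) : cea2 a b E = E / 2 := by
  unfold cea2
  split
  · exact min_eq_right ha
  · rw [min_eq_right hb]; ring

theorem cea2_eq_sub {a b E : ℝ} (hba : b < a) (hb : b ≤ E / 2) : cea2 a b E = E - b := by
  rw [cea2, if_neg hba.not_ge, min_eq_left hb]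

theorem cea_threshold_determines_partner_general (c1 cn1 cn α : ℝ)
    (h1 : 0 < c1) (h2 : c1 ≤ cn1) (h3 : cn1 ≤ cn)
    (hα1 : α < 1)
    (hβ : 2 * c1 / (c1 + cn) ≤ α) (hγ : α ≤ 2 * cn1 / (cn1 + cn)) :
    (α ≤ 2 * c1 / (2 * c1 - cn1 + cn) →
      cea2 cn cn1 (α * (cn1 + cn)) ≥ cea2 cn c1 (α * (c1 + cn))) ∧
    (2 * c1 / (2 * c1 - cn1 + cn) ≤ α →
      cea2 cn c1 (α * (c1 + cn)) ≥ cea2 cn cn1 (α * (cn1 + cn))) := by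
  have hc1cn : 0 < c1 + cn := by linarith
  have hβ' : 2 * c1 ≤ α * (c1 + cn) := (div_le_iff₀ hc1cn).1 hβ
  have hγ' : α * (cn1 + cn) ≤ 2 * cn1 := (le_div_iff₀ (by linarith)).1 hγ
  -- `2 c₁ ≤ α (c₁ + cₙ) < c₁ + cₙ`
  have hc1_lt : c1 < cn := by linarith [mul_lt_mul_of_pos_right hα1 hc1cn]
  rw [cea2_eq_half (by linarith) (by linarith), cea2_eq_sub hc1_lt (by linarith)]
  have hδ : 0 < 2 * c1 - cn1 + cn := by linarith
  -- Both payoffs are now affine in `α`, and they coincide exactly at `α = 2c₁/(2c₁ - c_{n-1} + cₙ)`.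
  constructor <;> intro h
  · rw [le_div_iff₀ hδ] at h; linarith
  · rw [div_le_iff₀ hδ] at h; linarith

/-- For `2c₁/(c₁+cₙ) ≤ α ≤ 2c_{n-1}/(c_{n-1}+cₙ)`, the threshold
`δ₁ = 2c₁/(2c₁ - c_{n-1} + cₙ)` determines agent `n`'s preferred partner:
if `α ≤ δ₁` she weakly prefers `{n-1, n}`, and if `α ≥ δ₁` she weakly prefers
`{1, n}`. -/
theorem cea_threshold_determines_partner (c1 cn1 cn α : ℝ)
    (h1 : 0 < c1) (h2 : c1 ≤ cn1) (h3 : cn1 ≤ cn)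
    (hα0 : 0 < α) (hα1 : α < 1)
    (hβ : 2 * c1 / (c1 + cn) ≤ α) (hγ : α ≤ 2 * cn1 / (cn1 + cn)) :
    (α ≤ 2 * c1 / (2 * c1 - cn1 + cn) →
      cea2 cn cn1 (α * (cn1 + cn)) ≥ cea2 cn c1 (α * (c1 + cn))) ∧
    (2 * c1 / (2 * c1 - cn1 + cn) ≤ α →
      cea2 cn c1 (α * (c1 + cn)) ≥ cea2 cn cn1 (α * (cn1 + cn))) :=
  cea_threshold_determines_partner_general c1 cn1 cn α h1 h2 h3 hα1 hβ hγ
end
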